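/- arXiv:1905.11811 — 6 statements merged into one kernel-verified Lean document; each statement's English description precedes it below -/
import Mathlib

section
/- (Lemma 1: no oscillatory limit cycle.) Assume k_f > 0. If q : ℝ → ℝ is twice differentiable, satisfies I·q''(t) = −k_f·q'(t) + τ(q(t)) for all t ∈ [0, T] with T > 0, and the planar closure condition q(T) = q(0) and q'(T) = q'(0) holds, then q'(t) = 0 for all t ∈ [0, T]; in particular q is constant on [0, T], so the system has no nonconstant periodic solution that is contractible on the cylinder. -/
/-!
With a potential `V` for `-τ` (an antiderivative of `τ`, which exists since `τ` is continuous),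
the mechanical energy `E = I/2 · q'² + V(q)` satisfies `E' = -k_f · q'² ≤ 0` along solutions.
A closed orbit returns to its starting energy, so `E` is constant on `[0, T]`, hence `q' = 0`
there, and `q` is constant.
-/

open Set

lemma AntitoneOn.eqOn_Icc_of_le {α β : Type*} [PartialOrder α] [PartialOrder β] {f : α → β}
    {a b : α} (hf : AntitoneOn f (Icc a b)) (hab : a ≤ b) (hle : f a ≤ f b) :
    EqOn f (fun _ => f a) (Icc a b) := fun _ ht =>
  le_antisymm (hf (left_mem_Icc.2 hab) ht ht.1) (hle.trans (hf ht (right_mem_Icc.2 hab) ht.2))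

lemma eqOn_zero_Ioo_of_hasDerivAt_nonpos_of_le {f f' : ℝ → ℝ} {a b : ℝ} (hab : a ≤ b)
    (hcont : ContinuousOn f (Icc a b)) (hf : ∀ t ∈ Ioo a b, HasDerivAt f (f' t) t)
    (hf' : ∀ t ∈ Ioo a b, f' t ≤ 0) (hle : f a ≤ f b) : EqOn f' 0 (Ioo a b) := by
  have hanti : AntitoneOn f (Icc a b) :=
    antitoneOn_of_hasDerivWithinAt_nonpos (convex_Icc a b) hcont
      (fun t ht => (hf t (by rwa [interior_Icc] at ht)).hasDerivWithinAt)
      (fun t ht => hf' t (by rwa [interior_Icc] at ht))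
  intro t ht
  have hloc : f =ᶠ[nhds t] fun _ => f a := by
    filter_upwards [Icc_mem_nhds ht.1 ht.2] with s hs
    exact hanti.eqOn_Icc_of_le hab hle hs
  exact (hf t ht).unique ((hasDerivAt_const t (f a)).congr_of_eventuallyEq hloc)

noncomputable def mechanicalEnergy (I : ℝ) (V q q' : ℝ → ℝ) (t : ℝ) : ℝ :=
  I / 2 * q' t ^ 2 + V (q t)

lemma hasDerivAt_mechanicalEnergy {I : ℝ} {V q q' q'' : ℝ → ℝ} {F t : ℝ}
    (hV : HasDerivAt V F (q t)) (hq : HasDerivAt q (q' t) t) (hq' : HasDerivAt q' (q'' t) t) :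
    HasDerivAt (mechanicalEnergy I V q q') (q' t * (I * q'' t + F)) t := by
  refine (((hq'.pow 2).const_mul (I / 2)).add (hV.comp t hq)).congr_deriv ?_
  push_cast
  ring

theorem no_oscillatory_limit_cycle_general
    (I kf : ℝ) (hkf : 0 < kf)
    (τ : ℝ → ℝ) (hτ : Continuous τ)
    (T : ℝ) (hT : 0 < T)
    (q q' q'' : ℝ → ℝ)
    (hq : ∀ t, HasDerivAt q (q' t) t)
    (hq' : ∀ t, HasDerivAt q' (q'' t) t)
    (hode : ∀ t ∈ Set.Icc (0:ℝ) T, I * q'' t = -kf * q' t + τ (q t))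
    (hclose_q : q T = q 0) (hclose_q' : q' T = q' 0) :
    ∀ t ∈ Set.Icc (0:ℝ) T, q' t = 0 ∧ q t = q 0 := by
  set V : ℝ → ℝ := fun x => -∫ s in (0:ℝ)..x, τ s
  have hV : ∀ x, HasDerivAt V (-τ x) x := fun x =>
    (hτ.integral_hasStrictDerivAt 0 x).hasDerivAt.neg
  set E := mechanicalEnergy I V q q'
  have hE : ∀ t, HasDerivAt E (q' t * (I * q'' t + -τ (q t))) t := fun t =>
    hasDerivAt_mechanicalEnergy (hV (q t)) (hq t) (hq' t)
  have hdissipation : ∀ t ∈ Icc 0 T, q' t * (I * q'' t + -τ (q t)) = -kf * q' t ^ 2 := by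
    intro t ht
    linear_combination q' t * hode t ht
  have hE_closed : E 0 ≤ E T := by simp [E, mechanicalEnergy, hclose_q, hclose_q']
  have hflat : EqOn (fun t => -kf * q' t ^ 2) 0 (Ioo 0 T) :=
    eqOn_zero_Ioo_of_hasDerivAt_nonpos_of_le hT.le
      (HasDerivAt.continuousOn fun t _ => hE t)
      (fun t ht => hdissipation t (Ioo_subset_Icc_self ht) ▸ hE t)
      (fun _ _ => mul_nonpos_of_nonpos_of_nonneg (neg_nonpos.2 hkf.le) (sq_nonneg _)) hE_closed
  have hvel : EqOn q' 0 (Icc 0 T) :=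
    EqOn.of_subset_closure (fun t ht => by simpa [hkf.ne'] using hflat ht)
      (HasDerivAt.continuousOn fun t _ => hq' t) continuousOn_const Ioo_subset_Icc_self
      (closure_Ioo hT.ne).ge
  intro t ht
  exact ⟨hvel ht, constant_of_has_deriv_right_zero (HasDerivAt.continuousOn fun s _ => hq s)
    (fun s hs => by simpa [hvel (Ico_subset_Icc_self hs)] using (hq s).hasDerivWithinAt) t ht⟩

/-- **Lemma 1: no oscillatory limit cycle.**
Assume `k_f > 0`. If `q` is twice differentiable and satisfies
`I·q''(t) = −k_f·q'(t) + τ(q(t))` for all `t ∈ [0, T]` with `T > 0`, and the planar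
closure condition `q(T) = q(0)`, `q'(T) = q'(0)` holds, then `q'(t) = 0` for all
`t ∈ [0, T]`; in particular `q` is constant on `[0, T]`.  Hence the system has no
nonconstant periodic solution that is contractible on the cylinder. -/
theorem no_oscillatory_limit_cycle
    (I kf : ℝ) (hI : 0 < I) (hkf : 0 < kf)
    (τ : ℝ → ℝ) (hτ : Continuous τ)
    (T : ℝ) (hT : 0 < T)
    (q q' q'' : ℝ → ℝ)
    (hq : ∀ t, HasDerivAt q (q' t) t)
    (hq' : ∀ t, HasDerivAt q' (q'' t) t)
    (hode : ∀ t ∈ Set.Icc (0:ℝ) T, I * q'' t = -kf * q' t + τ (q t))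
    (hclose_q : q T = q 0) (hclose_q' : q' T = q' 0) :
    ∀ t ∈ Set.Icc (0:ℝ) T, q' t = 0 ∧ q t = q 0 :=
  no_oscillatory_limit_cycle_general I kf hkf τ hτ T hT q q' q'' hq hq' hode hclose_q hclose_q'
end

section
/- (Lemma 2.) Assume k_f ≠ 0 and that τ : ℝ → ℝ is continuous and 2π-periodic. If z : [0, 2π] → ℝ is continuously differentiable, satisfies I·z(s)·z'(s) = −k_f·z(s) + τ(s) for all s ∈ [0, 2π], and z(0) = z(2π), then ∫₀^{2π} z(s) ds = −U(2π)/k_f, where U(q) = −∫₀^q τ(s) ds. -/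
/-!
The left-hand side `I z z'` of the equation is the derivative of `I z² / 2`, so by the periodicity
`z 0 = z (2π)` it integrates to zero over `[0, 2π]`. Integrating the equation therefore gives
`k_f ∫ z = ∫ τ = -U(2π)`: the energy dissipated by friction over one turn equals the work of the
torque.
-/

/-- The potential `U(q) = -∫₀^q τ(s) ds`. -/
noncomputable def potentialU (τ : ℝ → ℝ) (q : ℝ) : ℝ := -∫ s in (0:ℝ)..q, τ s

open Set intervalIntegral MeasureTheory

theorem integral_mul_deriv_eq_zero_of_eq {z z' : ℝ → ℝ} {a b : ℝ}
    (hz : ∀ x ∈ uIcc a b, HasDerivAt z (z' x) x) (hz' : IntervalIntegrable z' volume a b)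
    (hab : z a = z b) :
    ∫ x in a..b, z x * z' x = 0 := by
  have hzc : ContinuousOn z (uIcc a b) := fun x hx => (hz x hx).continuousAt.continuousWithinAt
  have hsq : ∀ x ∈ uIcc a b, HasDerivAt (fun y => z y * z y / 2) (z x * z' x) x := fun x hx =>
    (((hz x hx).mul (hz x hx)).div_const 2).congr_deriv (by ring)
  rw [integral_eq_sub_of_hasDerivAt hsq (hz'.continuousOn_mul hzc), hab, sub_self]

theorem mul_integral_eq_integral_of_mul_deriv_eq {I kf a b : ℝ} {τ z z' : ℝ → ℝ}
    (hτ : IntervalIntegrable τ volume a b)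
    (hz : ∀ x ∈ uIcc a b, HasDerivAt z (z' x) x) (hz' : IntervalIntegrable z' volume a b)
    (hode : ∀ x ∈ uIcc a b, I * z x * z' x = -kf * z x + τ x) (hab : z a = z b) :
    kf * ∫ x in a..b, z x = ∫ x in a..b, τ x := by
  have hzc : ContinuousOn z (uIcc a b) := fun x hx => (hz x hx).continuousAt.continuousWithinAt
  have hbalance : ∫ x in a..b, (-kf * z x + τ x) = 0 := by
    rw [← integral_congr hode]
    simp only [mul_assoc, intervalIntegral.integral_const_mul,
      integral_mul_deriv_eq_zero_of_eq hz hz' hab, mul_zero]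
  rw [integral_add (hzc.intervalIntegrable.const_mul _) hτ,
    intervalIntegral.integral_const_mul] at hbalance
  linarith

theorem rotational_cycle_integral_general
    (I kf : ℝ) (hkf : kf ≠ 0)
    (τ : ℝ → ℝ) (hτ : Continuous τ)
    (z z' : ℝ → ℝ)
    (hz : ∀ s ∈ Set.Icc (0:ℝ) (2 * Real.pi), HasDerivAt z (z' s) s)
    (hz' : ContinuousOn z' (Set.Icc (0:ℝ) (2 * Real.pi)))
    (hode : ∀ s ∈ Set.Icc (0:ℝ) (2 * Real.pi), I * z s * z' s = -kf * z s + τ s)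
    (hclose : z 0 = z (2 * Real.pi)) :
    ∫ s in (0:ℝ)..(2 * Real.pi), z s = -potentialU τ (2 * Real.pi) / kf := by
  have hIcc : uIcc 0 (2 * Real.pi) = Icc 0 (2 * Real.pi) := uIcc_of_le (by positivity)
  rw [← hIcc] at hz hz' hode
  have hbalance := mul_integral_eq_integral_of_mul_deriv_eq (hτ.intervalIntegrable _ _) hz
    hz'.intervalIntegrable hode hclose
  rw [potentialU, neg_neg, ← hbalance, mul_div_cancel_left₀ _ hkf]

/-- **Lemma 2.** Assume `k_f ≠ 0` and `τ` continuous and 2π-periodic.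
If `z : [0, 2π] → ℝ` is continuously differentiable, satisfies
`I·z(s)·z'(s) = −k_f·z(s) + τ(s)` for all `s ∈ [0, 2π]`, and `z(0) = z(2π)`,
then `∫₀^{2π} z(s) ds = −U(2π)/k_f`. -/
theorem rotational_cycle_integral
    (I kf : ℝ) (hI : 0 < I) (hkf : kf ≠ 0)
    (τ : ℝ → ℝ) (hτ : Continuous τ) (hper : Function.Periodic τ (2 * Real.pi))
    (z z' : ℝ → ℝ)
    (hz : ∀ s ∈ Set.Icc (0:ℝ) (2 * Real.pi), HasDerivAt z (z' s) s)
    (hz' : ContinuousOn z' (Set.Icc (0:ℝ) (2 * Real.pi)))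
    (hode : ∀ s ∈ Set.Icc (0:ℝ) (2 * Real.pi), I * z s * z' s = -kf * z s + τ s)
    (hclose : z 0 = z (2 * Real.pi)) :
    ∫ s in (0:ℝ)..(2 * Real.pi), z s = -potentialU τ (2 * Real.pi) / kf :=
  rotational_cycle_integral_general I kf hkf τ hτ z z' hz hz' hode hclose
end

section
/- (Uniqueness of the non-contractible limit cycle, graph form.) Assume k_f > 0 and that τ : ℝ → ℝ is Lipschitz continuous and 2π-periodic. If z₁, z₂ : ℝ → ℝ are continuously differentiable, 2π-periodic, nowhere vanishing, and each satisfies I·zᵢ(s)·zᵢ'(s) = −k_f·zᵢ(s) + τ(s) for all s ∈ ℝ, then z₁ = z₂. -/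
/-! With `u = z₁² - z₂²` the two equations give `u' = -(2 k_f / I) (z₁ - z₂)`, so `u` vanishes at each
of its critical points. Being continuous and periodic, `u` attains its maximum and its minimum,
both at critical points; hence `u ≡ 0`, so `u' ≡ 0` and `z₁ = z₂`. -/

open Set

namespace Function.Periodic

variable {α : Type*} [TopologicalSpace α] [LinearOrder α] {f : ℝ → α} {c : ℝ}

theorem exists_isMaxOn_univ_of_continuous [ClosedIciTopology α] (hp : Periodic f c) (hc : c ≠ 0)
    (hf : Continuous f) : ∃ x, IsMaxOn f univ x := by
  obtain ⟨_, ⟨x, rfl⟩, hx⟩ := (hp.compact_of_continuous hc hf).exists_isGreatest (range_nonempty f)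
  exact ⟨x, fun y _ => hx (mem_range_self y)⟩

theorem exists_isMinOn_univ_of_continuous [ClosedIicTopology α] (hp : Periodic f c) (hc : c ≠ 0)
    (hf : Continuous f) : ∃ x, IsMinOn f univ x :=
  exists_isMaxOn_univ_of_continuous (α := αᵒᵈ) hp hc hf

end Function.Periodic

theorem Function.Periodic.eq_zero_of_forall_critical_eq_zero {f f' : ℝ → ℝ} {c : ℝ}
    (hp : Function.Periodic f c) (hc : c ≠ 0) (hf : ∀ x, HasDerivAt f (f' x) x)
    (hcrit : ∀ x, f' x = 0 → f x = 0) : f = 0 := by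
  have hcont : Continuous f := continuous_iff_continuousAt.2 fun x => (hf x).continuousAt
  obtain ⟨xmax, hmax⟩ := hp.exists_isMaxOn_univ_of_continuous hc hcont
  obtain ⟨xmin, hmin⟩ := hp.exists_isMinOn_univ_of_continuous hc hcont
  have hfmax : f xmax = 0 :=
    hcrit xmax ((hmax.isLocalMax Filter.univ_mem).hasDerivAt_eq_zero (hf xmax))
  have hfmin : f xmin = 0 :=
    hcrit xmin ((hmin.isLocalMin Filter.univ_mem).hasDerivAt_eq_zero (hf xmin))
  funext x
  exact le_antisymm ((hmax (mem_univ x)).trans_eq hfmax) (hfmin.symm.trans_le (hmin (mem_univ x)))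

theorem hasDerivAt_mul_self_sub_mul_self_of_ode {I kf t : ℝ} (hI : I ≠ 0) {z₁ z₂ : ℝ → ℝ}
    {s a₁ a₂ : ℝ} (hz₁ : HasDerivAt z₁ a₁ s) (hz₂ : HasDerivAt z₂ a₂ s)
    (hode₁ : I * z₁ s * a₁ = -kf * z₁ s + t) (hode₂ : I * z₂ s * a₂ = -kf * z₂ s + t) :
    HasDerivAt (z₁ * z₁ - z₂ * z₂) (-(2 * kf / I) * (z₁ s - z₂ s)) s := by
  refine ((hz₁.mul hz₁).sub (hz₂.mul hz₂)).congr_deriv ?_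
  field_simp
  linear_combination 2 * hode₁ - 2 * hode₂

theorem noncontractible_limit_cycle_unique_general
    (I kf : ℝ) (hI : 0 < I) (hkf : 0 < kf)
    (τ : ℝ → ℝ)
    (z₁ z₁' z₂ z₂' : ℝ → ℝ)
    (hz₁ : ∀ s, HasDerivAt z₁ (z₁' s) s)
    (hz₂ : ∀ s, HasDerivAt z₂ (z₂' s) s)
    (hp₁ : Function.Periodic z₁ (2 * Real.pi))
    (hp₂ : Function.Periodic z₂ (2 * Real.pi))
    (hode₁ : ∀ s, I * z₁ s * z₁' s = -kf * z₁ s + τ s)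
    (hode₂ : ∀ s, I * z₂ s * z₂' s = -kf * z₂ s + τ s) :
    z₁ = z₂ := by
  have hu : ∀ s, HasDerivAt (z₁ * z₁ - z₂ * z₂) (-(2 * kf / I) * (z₁ s - z₂ s)) s := fun s =>
    hasDerivAt_mul_self_sub_mul_self_of_ode hI.ne' (hz₁ s) (hz₂ s) (hode₁ s) (hode₂ s)
  have hcoef : -(2 * kf / I) ≠ 0 := by
    have : 0 < 2 * kf / I := by positivity
    linarith
  have heq_of_crit : ∀ s, -(2 * kf / I) * (z₁ s - z₂ s) = 0 → z₁ s = z₂ s := fun s h =>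
    sub_eq_zero.1 ((mul_eq_zero.1 h).resolve_left hcoef)
  have hzero : z₁ * z₁ - z₂ * z₂ = 0 :=
    ((hp₁.mul hp₁).sub (hp₂.mul hp₂)).eq_zero_of_forall_critical_eq_zero Real.two_pi_pos.ne' hu
      fun s h => by simp [heq_of_crit s h]
  funext s
  refine heq_of_crit s ((hu s).unique ?_)
  rw [hzero]
  exact hasDerivAt_const s 0

/-- **uniqueness of the non-contractible limit cycle, graph form.**
Assume `k_f > 0` and `τ` Lipschitz continuous and 2π-periodic. If `z₁, z₂ : ℝ → ℝ`
are continuously differentiable, 2π-periodic, nowhere vanishing, and each satisfies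
`I·zᵢ(s)·zᵢ'(s) = −k_f·zᵢ(s) + τ(s)` for all `s ∈ ℝ`, then `z₁ = z₂`. -/
theorem noncontractible_limit_cycle_unique
    (I kf : ℝ) (hI : 0 < I) (hkf : 0 < kf)
    (τ : ℝ → ℝ) (hlip : ∃ K, LipschitzWith K τ)
    (hper : Function.Periodic τ (2 * Real.pi))
    (z₁ z₁' z₂ z₂' : ℝ → ℝ)
    (hz₁ : ∀ s, HasDerivAt z₁ (z₁' s) s) (hz₁' : Continuous z₁')
    (hz₂ : ∀ s, HasDerivAt z₂ (z₂' s) s) (hz₂' : Continuous z₂')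
    (hp₁ : Function.Periodic z₁ (2 * Real.pi))
    (hp₂ : Function.Periodic z₂ (2 * Real.pi))
    (hn₁ : ∀ s, z₁ s ≠ 0) (hn₂ : ∀ s, z₂ s ≠ 0)
    (hode₁ : ∀ s, I * z₁ s * z₁' s = -kf * z₁ s + τ s)
    (hode₂ : ∀ s, I * z₂ s * z₂' s = -kf * z₂ s + τ s) :
    z₁ = z₂ :=
  noncontractible_limit_cycle_unique_general I kf hI hkf τ z₁ z₁' z₂ z₂' hz₁ hz₂ hp₁ hp₂ hode₁ hode₂
end

section
/- (Theorem 1, sign definiteness, time form.) Assume k_f > 0 and that τ : ℝ → ℝ is Lipschitz continuous and 2π-periodic. Suppose q : ℝ → ℝ is twice differentiable, satisfies I·q''(t) = −k_f·q'(t) + τ(q(t)) for all t, satisfies q(t + T) = q(t) + 2π for all t for some T > 0, and the map t ↦ (q(t) mod 2π, q'(t)) is injective on [0, T). Then q'(t) > 0 for all t ∈ ℝ; that is, a non-contractible limit cycle never crosses or touches the axis q' = 0. -/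
/-!
Since `q (t + T) = q t + 2π` and `q'` is `T`-periodic, the map `t ↦ (q t mod 2π, q' t)` is
`T`-periodic, so injectivity on one period forbids `q (s + δ) = q s ∧ q' (s + δ) = q' s` for
`0 < δ < T`. The `T`-periodic gaps `q (· + δ) - q` are therefore positive for every such `δ`:
otherwise, at the largest `δ` for which the gap still reaches `0`, it would have a minimum `0`,
where both conditions hold. Hence `q` increases and `q' ≥ 0`. At a zero of `q'` the velocity is
minimal, so `q'' = 0` and then `τ q = 0`: the state is an equilibrium, and by uniqueness of
solutions `q` would be constant, contradicting the winding.
-/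

open Set Function Filter Topology

theorem Function.Periodic.add_ne_of_injOn_Ico {α : Type*} {Φ : ℝ → α} {T : ℝ}
    (hΦ : Periodic Φ T) (hT : 0 < T) (hinj : InjOn Φ (Ico 0 T)) (x : ℝ) {δ : ℝ}
    (hδ : δ ∈ Ioo 0 T) : Φ (x + δ) ≠ Φ x := by
  intro h
  have hmod : ∀ y, Φ (toIcoMod hT 0 y) = Φ y := fun y => hΦ.sub_zsmul_eq _
  obtain ⟨n, hn⟩ := (toIcoMod_eq_toIcoMod hT (a := 0) (b := x + δ) (c := x)).mp <|
    hinj (toIcoMod_mem_Ico' hT _) (toIcoMod_mem_Ico' hT _) (by rw [hmod, hmod, h])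
  rw [zsmul_eq_mul] at hn
  have h0 : (0 : ℝ) < -n := by nlinarith [hδ.1]
  have h1 : (-n : ℝ) < 1 := by nlinarith [hδ.2]
  norm_cast at h0 h1
  omega

section
variable {q q' : ℝ → ℝ} {T c δ : ℝ}

theorem periodic_of_hasDerivAt_of_map_add_eq (hq : ∀ t, HasDerivAt q (q' t) t)
    (hwind : ∀ t, q (t + T) = q t + c) : Periodic q' T := fun t =>
  ((hq (t + T)).comp_add_const t T).unique <| by simpa only [hwind] using (hq t).add_const c

theorem periodic_map_add_sub_of_map_add_eq (hwind : ∀ t, q (t + T) = q t + c) (δ : ℝ) :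
    Periodic (fun u => q (u + δ) - q u) T := fun u => by
  simp only [add_right_comm u T δ, hwind]
  ring

theorem map_lt_map_add_of_forall_le (hq : ∀ t, HasDerivAt q (q' t) t)
    (htan : ∀ s, q (s + δ) = q s → q' (s + δ) ≠ q' s) (hle : ∀ u, q u ≤ q (u + δ)) (s : ℝ) :
    q s < q (s + δ) := by
  refine (hle s).lt_of_ne fun heq => htan s heq.symm ?_
  have hmin : IsLocalMin (fun u => q (u + δ) - q u) s :=
    Eventually.of_forall fun u => by simp only [heq, sub_self, sub_nonneg, hle u]
  exact sub_eq_zero.mp <| hmin.hasDerivAt_eq_zero (((hq (s + δ)).comp_add_const s δ).sub (hq s))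

theorem hasDerivAt_nonneg_of_map_lt_map_add {t : ℝ} (hq : HasDerivAt q (q' t) t) (hT : 0 < T)
    (hlt : ∀ δ ∈ Ioo 0 T, q t < q (t + δ)) : 0 ≤ q' t := by
  have hslope := hasDerivAt_iff_tendsto_slope.mp hq
  refine ge_of_tendsto (hslope.mono_left (nhdsGT_le_nhdsNE t)) ?_
  filter_upwards [Ioo_mem_nhdsGT (show t < t + T by linarith)] with u hu
  have := hlt (u - t) ⟨by linarith [hu.1], by linarith [hu.2]⟩
  rw [add_sub_cancel] at this
  rw [slope_def_field]
  exact div_nonneg (by linarith) (by linarith [hu.1])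

theorem map_lt_map_add_of_forall_ne (hq : ∀ t, HasDerivAt q (q' t) t)
    (hwind : ∀ t, q (t + T) = q t + c) (hc : 0 < c) (hT : 0 < T)
    (htan : ∀ δ ∈ Ioo 0 T, ∀ s, q (s + δ) = q s → q' (s + δ) ≠ q' s) :
    ∀ δ ∈ Ioo 0 T, ∀ t, q t < q (t + δ) := by
  by_contra! ⟨δ₀, hδ₀, t₀, h₀⟩
  have hqc : Continuous q := continuous_iff_continuousAt.mpr fun t => (hq t).continuousAt
  -- take the largest `δ ≥ δ₀` at which some gap `q (u + δ) - q u` is `≤ 0`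
  set K := (Icc δ₀ T ×ˢ Icc 0 T) ∩ {p : ℝ × ℝ | q (p.2 + p.1) ≤ q p.2}
  have hK : IsCompact K := (isCompact_Icc.prod isCompact_Icc).inter_right <|
    isClosed_le (hqc.comp (continuous_snd.add continuous_fst)) (hqc.comp continuous_snd)
  obtain ⟨u₀, hu₀, hu₀eq⟩ := (periodic_map_add_sub_of_map_add_eq hwind δ₀).exists_mem_Ico₀ hT t₀
  have hK₀ : (δ₀, u₀) ∈ K :=
    ⟨⟨⟨le_rfl, hδ₀.2.le⟩, Ico_subset_Icc_self hu₀⟩, show q (u₀ + δ₀) ≤ q u₀ by linarith⟩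
  obtain ⟨⟨δ, u⟩, ⟨⟨⟨hδ₀δ, hδT'⟩, -⟩, hδu⟩, hmax⟩ :=
    hK.exists_isMaxOn ⟨_, hK₀⟩ continuous_fst.continuousOn
  dsimp only at hδ₀δ hδT'
  change q (u + δ) ≤ q u at hδu
  have hδT : δ < T := hδT'.lt_of_ne fun h => by rw [h, hwind] at hδu; linarith
  have hle : ∀ v, q v ≤ q (v + δ) := by
    by_contra! ⟨v, hv⟩
    obtain ⟨v₁, hv₁, hv₁eq⟩ := (periodic_map_add_sub_of_map_add_eq hwind δ).exists_mem_Ico₀ hT v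
    have hopen : IsOpen {δ' | q (v₁ + δ') < q v₁} :=
      isOpen_lt (hqc.comp (continuous_const.add continuous_id)) continuous_const
    have hδopen : {δ' | q (v₁ + δ') < q v₁} ∈ 𝓝 δ :=
      hopen.mem_nhds (show q (v₁ + δ) < q v₁ by linarith)
    obtain ⟨δ₂, hδ₂, hδ₂T⟩ := Filter.nonempty_of_mem <|
      inter_mem (mem_nhdsWithin_of_mem_nhds hδopen) (Ioo_mem_nhdsGT hδT)
    have : δ₂ ≤ δ := hmax (show (δ₂, v₁) ∈ K from
      ⟨⟨⟨by linarith [hδ₂T.1], hδ₂T.2.le⟩, Ico_subset_Icc_self hv₁⟩,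
        show q (v₁ + δ₂) ≤ q v₁ from le_of_lt hδ₂⟩)
    linarith [hδ₂T.1]
  exact (map_lt_map_add_of_forall_le hq (htan δ ⟨hδ₀.1.trans_le hδ₀δ, hδT⟩) hle u).not_ge hδu
end

noncomputable def flywheelField (I kf : ℝ) (τ : ℝ → ℝ) (p : ℝ × ℝ) : ℝ × ℝ :=
  (p.2, I⁻¹ * (-kf * p.2 + τ p.1))

theorem exists_lipschitzWith_flywheelField (I kf : ℝ) {τ : ℝ → ℝ} {K : NNReal}
    (hK : LipschitzWith K τ) : ∃ L, LipschitzWith L (flywheelField I kf τ) :=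
  ⟨_, LipschitzWith.prodMk LipschitzWith.prod_snd <| (lipschitzWith_smul I⁻¹).comp <|
    ((lipschitzWith_smul (-kf)).comp LipschitzWith.prod_snd).add (hK.comp LipschitzWith.prod_fst)⟩

theorem hasDerivAt_flywheelField {I kf : ℝ} (hI : I ≠ 0) {τ q q' q'' : ℝ → ℝ}
    (hq : ∀ t, HasDerivAt q (q' t) t) (hq' : ∀ t, HasDerivAt q' (q'' t) t)
    (hode : ∀ t, I * q'' t = -kf * q' t + τ (q t)) (t : ℝ) :
    HasDerivAt (fun t => (q t, q' t)) (flywheelField I kf τ (q t, q' t)) t := by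
  have hfield : flywheelField I kf τ (q t, q' t) = (q' t, q'' t) := by
    simp only [flywheelField, ← hode, inv_mul_cancel_left₀ hI]
  exact hfield ▸ (hq t).prodMk (hq' t)

theorem eq_of_velocity_eq_zero_of_torque_eq_zero {I kf : ℝ} (hI : I ≠ 0) {τ q q' q'' : ℝ → ℝ}
    (hlip : ∃ K, LipschitzWith K τ)
    (hq : ∀ t, HasDerivAt q (q' t) t) (hq' : ∀ t, HasDerivAt q' (q'' t) t)
    (hode : ∀ t, I * q'' t = -kf * q' t + τ (q t)) {t₀ : ℝ} (hv : q' t₀ = 0)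
    (hτ : τ (q t₀) = 0) (t : ℝ) : q t = q t₀ := by
  obtain ⟨K, hK⟩ := hlip
  obtain ⟨L, hL⟩ := exists_lipschitzWith_flywheelField I kf hK
  have hrest : flywheelField I kf τ (q t₀, 0) = 0 := by simp [flywheelField, hτ]
  have := ODE_solution_unique_univ (v := fun _ => flywheelField I kf τ) (s := fun _ => univ)
    (t₀ := t₀) (f := fun t => (q t, q' t)) (g := fun _ => (q t₀, 0))
    (fun _ => hL.lipschitzOnWith)
    (fun t => ⟨hasDerivAt_flywheelField hI hq hq' hode t, trivial⟩)
    (fun t => ⟨hrest ▸ hasDerivAt_const t _, trivial⟩) (by rw [hv])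
  exact congrArg Prod.fst (congrFun this t)

theorem noncontractible_cycle_positive_velocity_general
    (I kf : ℝ) (hI : 0 < I)
    (τ : ℝ → ℝ) (hlip : ∃ K, LipschitzWith K τ)
    (T : ℝ) (hT : 0 < T)
    (q q' q'' : ℝ → ℝ)
    (hq : ∀ t, HasDerivAt q (q' t) t)
    (hq' : ∀ t, HasDerivAt q' (q'' t) t)
    (hode : ∀ t, I * q'' t = -kf * q' t + τ (q t))
    (hwind : ∀ t, q (t + T) = q t + 2 * Real.pi)
    (hinj : Set.InjOn (fun t => (((q t : ℝ) : Real.Angle), q' t)) (Set.Ico 0 T)) :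
    ∀ t : ℝ, 0 < q' t := by
  have hΦ : Periodic (fun t => ((q t : Real.Angle), q' t)) T := fun t => by
    simp only [hwind, Real.Angle.coe_add, Real.Angle.coe_two_pi, add_zero,
      periodic_of_hasDerivAt_of_map_add_eq hq hwind t]
  have hlt := map_lt_map_add_of_forall_ne hq hwind Real.two_pi_pos hT
    fun δ hδ s hqs hq's => hΦ.add_ne_of_injOn_Ico hT hinj s hδ (by simp only [hqs, hq's])
  have hnonneg : ∀ t, 0 ≤ q' t := fun t =>
    hasDerivAt_nonneg_of_map_lt_map_add (hq t) hT fun δ hδ => hlt δ hδ t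
  intro t
  refine (hnonneg t).lt_of_ne' fun hv => ?_
  have hacc : q'' t = 0 :=
    IsLocalMin.hasDerivAt_eq_zero (Eventually.of_forall fun u => hv ▸ hnonneg u) (hq' t)
  have hτ : τ (q t) = 0 := by simpa [hacc, hv] using (hode t).symm
  have hrest := eq_of_velocity_eq_zero_of_torque_eq_zero hI.ne' hlip hq hq' hode hv hτ (t + T)
  linarith [hwind t, Real.pi_pos]

/-- **Theorem 1, sign definiteness, time form.**
Assume `k_f > 0` and `τ` Lipschitz continuous and 2π-periodic. Suppose `q : ℝ → ℝ` is
twice differentiable, satisfies `I·q''(t) = −k_f·q'(t) + τ(q(t))` for all `t`,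
satisfies `q(t + T) = q(t) + 2π` for all `t` for some `T > 0`, and the projection
`t ↦ (q(t) mod 2π, q'(t))` onto the cylinder `𝕊¹ × ℝ` is injective on `[0, T)`.
Then `q'(t) > 0` for all `t`: a non-contractible limit cycle never crosses or
touches the axis `q' = 0`. -/
theorem noncontractible_cycle_positive_velocity
    (I kf : ℝ) (hI : 0 < I) (hkf : 0 < kf)
    (τ : ℝ → ℝ) (hlip : ∃ K, LipschitzWith K τ)
    (hper : Function.Periodic τ (2 * Real.pi))
    (T : ℝ) (hT : 0 < T)
    (q q' q'' : ℝ → ℝ)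
    (hq : ∀ t, HasDerivAt q (q' t) t)
    (hq' : ∀ t, HasDerivAt q' (q'' t) t)
    (hode : ∀ t, I * q'' t = -kf * q' t + τ (q t))
    (hwind : ∀ t, q (t + T) = q t + 2 * Real.pi)
    (hinj : Set.InjOn (fun t => (((q t : ℝ) : Real.Angle), q' t)) (Set.Ico 0 T)) :
    ∀ t : ℝ, 0 < q' t :=
  noncontractible_cycle_positive_velocity_general I kf hI τ hlip T hT q q' q'' hq hq' hode hwind
    hinj
end

section
/- (Thermodynamic work equals mechanical work.) Under the concrete engine definitions, if V₁(q)/T_h + V₂(q)/T_c ≠ 0 for all q, then for all q ∈ ℝ the total torque satisfies τ(q) = (p(q) − p_a) · d/dq (V₁(q) + V₂(q)); consequently, along any differentiable angle trajectory q(t), the mechanical power τ(q(t))·q'(t) equals (p(q(t)) − p_a) times the time derivative of the total gas volume V₁(q(t)) + V₂(q(t)). -/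
/-- Piston position: `x(q) = −r·cos q + √(l² − r²·sin² q)`. -/
noncomputable def pistonX (r l q : ℝ) : ℝ :=
  -r * Real.cos q + Real.sqrt (l ^ 2 - r ^ 2 * Real.sin q ^ 2)

/-- Torque-arm function: `φ(q) = r·sin q − r²·sin q·cos q / √(l² − r²·sin² q)`. -/
noncomputable def torqueArm (r l q : ℝ) : ℝ :=
  r * Real.sin q - r ^ 2 * Real.sin q * Real.cos q /
    Real.sqrt (l ^ 2 - r ^ 2 * Real.sin q ^ 2)

/-- Volume of the hot cylinder: `V₁(q) = V₁ᵐᵃˣ − A₁·(x(q − α) − (l − r))`. -/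
noncomputable def vol1 (r l A₁ V₁max α q : ℝ) : ℝ :=
  V₁max - A₁ * (pistonX r l (q - α) - (l - r))

/-- Volume of the cold cylinder: `V₂(q) = V₂ᵐᵃˣ − A₂·(x(q) − (l − r))`. -/
noncomputable def vol2 (r l A₂ V₂max q : ℝ) : ℝ :=
  V₂max - A₂ * (pistonX r l q - (l - r))

/-- Pressure: `p(q) = N·R / (V₁(q)/T_h + V₂(q)/T_c)`. -/
noncomputable def pressure (r l A₁ A₂ V₁max V₂max α Th Tc N R q : ℝ) : ℝ :=
  N * R / (vol1 r l A₁ V₁max α q / Th + vol2 r l A₂ V₂max q / Tc)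

/-- Total torque: `τ(q) = −(A₁·φ(q − α) + A₂·φ(q))·(p(q) − p_a)`. -/
noncomputable def torque (r l A₁ A₂ V₁max V₂max α Th Tc N R pa q : ℝ) : ℝ :=
  -(A₁ * torqueArm r l (q - α) + A₂ * torqueArm r l q) *
    (pressure r l A₁ A₂ V₁max V₂max α Th Tc N R q - pa)


/-! The torque arm `φ` is the derivative of the piston position `x` (slider-crank kinematics),
so `−(A₁·φ(q − α) + A₂·φ(q)) = d/dq (V₁ + V₂)(q)`; the statement along a trajectory is then the
chain rule. -/

lemma hasDerivAt_pistonX {r l : ℝ} (hrl : r ^ 2 < l ^ 2) (q : ℝ) :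
    HasDerivAt (pistonX r l) (torqueArm r l q) q := by
  have hrad : 0 < l ^ 2 - r ^ 2 * Real.sin q ^ 2 := by
    nlinarith [Real.sin_sq_le_one q, sq_nonneg r]
  have hrad' : HasDerivAt (fun q => l ^ 2 - r ^ 2 * Real.sin q ^ 2)
      (-(r ^ 2 * (2 * Real.sin q * Real.cos q))) q := by
    simpa using (hasDerivAt_const q (l ^ 2)).fun_sub
      (((Real.hasDerivAt_sin q).pow 2).const_mul (r ^ 2))
  refine (((Real.hasDerivAt_cos q).const_mul (-r)).fun_add (hrad'.sqrt hrad.ne')).congr_deriv ?_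
  have hsqrt : Real.sqrt (l ^ 2 - r ^ 2 * Real.sin q ^ 2) ≠ 0 := (Real.sqrt_pos.mpr hrad).ne'
  unfold torqueArm
  field_simp
  ring

lemma hasDerivAt_vol1_add_vol2 {r l : ℝ} (hrl : r ^ 2 < l ^ 2) (A₁ A₂ V₁max V₂max α q : ℝ) :
    HasDerivAt (fun q' => vol1 r l A₁ V₁max α q' + vol2 r l A₂ V₂max q')
      (-(A₁ * torqueArm r l (q - α) + A₂ * torqueArm r l q)) q := by
  have hx₁ : HasDerivAt (fun q' => pistonX r l (q' - α)) (torqueArm r l (q - α)) q := by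
    simpa using (hasDerivAt_pistonX hrl (q - α)).comp_sub_const q α
  have hx₂ := hasDerivAt_pistonX hrl q
  refine ((((hx₁.sub_const (l - r)).const_mul A₁).const_sub V₁max).fun_add
    (((hx₂.sub_const (l - r)).const_mul A₂).const_sub V₂max)).congr_deriv ?_
  ring

lemma torque_eq_mul_deriv_vol1_add_vol2 {r l : ℝ} (hrl : r ^ 2 < l ^ 2)
    (A₁ A₂ V₁max V₂max α Th Tc N R pa q : ℝ) :
    torque r l A₁ A₂ V₁max V₂max α Th Tc N R pa q =
      (pressure r l A₁ A₂ V₁max V₂max α Th Tc N R q - pa) *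
        deriv (fun q' => vol1 r l A₁ V₁max α q' + vol2 r l A₂ V₂max q') q := by
  rw [(hasDerivAt_vol1_add_vol2 hrl A₁ A₂ V₁max V₂max α q).deriv, torque, mul_comm]

theorem thermo_work_eq_mech_work_general
    (r l A₁ A₂ V₁max V₂max α Th Tc N R pa : ℝ)
    (hr : 0 < r) (hrl : r < l) :
    (∀ q : ℝ,
        torque r l A₁ A₂ V₁max V₂max α Th Tc N R pa q =
          (pressure r l A₁ A₂ V₁max V₂max α Th Tc N R q - pa) *
            deriv (fun q' : ℝ => vol1 r l A₁ V₁max α q' + vol2 r l A₂ V₂max q') q) ∧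
      ∀ (qt qt' : ℝ → ℝ), (∀ t, HasDerivAt qt (qt' t) t) →
        ∀ t : ℝ,
          torque r l A₁ A₂ V₁max V₂max α Th Tc N R pa (qt t) * qt' t =
            (pressure r l A₁ A₂ V₁max V₂max α Th Tc N R (qt t) - pa) *
              deriv (fun s : ℝ => vol1 r l A₁ V₁max α (qt s) + vol2 r l A₂ V₂max (qt s)) t := by
  have hsq : r ^ 2 < l ^ 2 := by nlinarith
  refine ⟨torque_eq_mul_deriv_vol1_add_vol2 hsq A₁ A₂ V₁max V₂max α Th Tc N R pa, ?_⟩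
  intro qt qt' hqt t
  have hchain : HasDerivAt (fun s => vol1 r l A₁ V₁max α (qt s) + vol2 r l A₂ V₂max (qt s)) _ t :=
    (hasDerivAt_vol1_add_vol2 hsq A₁ A₂ V₁max V₂max α (qt t)).comp t (hqt t)
  rw [hchain.deriv, torque]
  ring

/-- **thermodynamic work equals mechanical work.**
If `V₁(q)/T_h + V₂(q)/T_c ≠ 0` for all `q`, then the total torque satisfies
`τ(q) = (p(q) − p_a) · d/dq (V₁(q) + V₂(q))` for all `q`; consequently, along any
differentiable angle trajectory `t ↦ q(t)`, the mechanical power `τ(q(t))·q'(t)`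
equals `(p(q(t)) − p_a)` times the time derivative of the total gas volume
`V₁(q(t)) + V₂(q(t))`. -/
theorem thermo_work_eq_mech_work
    (r l A₁ A₂ V₁max V₂max α Th Tc N R pa : ℝ)
    (hr : 0 < r) (hrl : r < l) (hA₁ : 0 < A₁) (hA₂ : 0 < A₂)
    (hTh : 0 < Th) (hTc : 0 < Tc) (hN : 0 < N) (hR : 0 < R)
    (hdenom : ∀ q : ℝ, vol1 r l A₁ V₁max α q / Th + vol2 r l A₂ V₂max q / Tc ≠ 0) :
    (∀ q : ℝ,
        torque r l A₁ A₂ V₁max V₂max α Th Tc N R pa q =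
          (pressure r l A₁ A₂ V₁max V₂max α Th Tc N R q - pa) *
            deriv (fun q' : ℝ => vol1 r l A₁ V₁max α q' + vol2 r l A₂ V₂max q') q) ∧
      ∀ (qt qt' : ℝ → ℝ), (∀ t, HasDerivAt qt (qt' t) t) →
        ∀ t : ℝ,
          torque r l A₁ A₂ V₁max V₂max α Th Tc N R pa (qt t) * qt' t =
            (pressure r l A₁ A₂ V₁max V₂max α Th Tc N R (qt t) - pa) *
              deriv (fun s : ℝ => vol1 r l A₁ V₁max α (qt s) + vol2 r l A₂ V₂max (qt s)) t :=
  thermo_work_eq_mech_work_general r l A₁ A₂ V₁max V₂max α Th Tc N R pa hr hrl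
end

section
/- (Symmetry of the torque under the reflection (q, α) ↦ (2π − q, 2π − α).) Under the concrete engine definitions, write τ_α for the torque with phase shift α. If V₁(q)/T_h + V₂(q)/T_c ≠ 0 for all q and all phase shifts, then for all q, α ∈ ℝ: τ_{2π−α}(2π − q) = −τ_α(q). In particular, q* is a zero of τ_α if and only if 2π − q* is a zero of τ_{2π−α}, and the bifurcation diagram of equilibria is symmetric under (q, α) ↦ (2π − q, 2π − α). -/
/-! The reflection `(q, α) ↦ (2π − q, 2π − α)` sends both crank angles `q` and `q − α` to their
negatives modulo `2π`. The piston position `x` is even and `2π`-periodic while the torque arm `φ`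
is odd and `2π`-periodic, so both volumes, hence the pressure, are unchanged and only the torque
arm changes sign. -/

open Real

lemma two_pi_sub_sub_two_pi_sub (q α : ℝ) : 2 * π - q - (2 * π - α) = -(q - α) := by
  ring

section Reflection

variable (r l : ℝ)

lemma pistonX_neg (q : ℝ) : pistonX r l (-q) = pistonX r l q := by
  simp only [pistonX, cos_neg, sin_neg, neg_sq]

lemma pistonX_two_pi_sub (q : ℝ) : pistonX r l (2 * π - q) = pistonX r l q := by
  simp only [pistonX, cos_two_pi_sub, sin_two_pi_sub, neg_sq]

lemma torqueArm_neg (q : ℝ) : torqueArm r l (-q) = -torqueArm r l q := by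
  simp only [torqueArm, cos_neg, sin_neg, neg_sq]
  ring

lemma torqueArm_two_pi_sub (q : ℝ) : torqueArm r l (2 * π - q) = -torqueArm r l q := by
  simp only [torqueArm, cos_two_pi_sub, sin_two_pi_sub, neg_sq]
  ring

variable (A₁ A₂ V₁max V₂max Th Tc N R pa : ℝ)

lemma vol1_reflect (α q : ℝ) :
    vol1 r l A₁ V₁max (2 * π - α) (2 * π - q) = vol1 r l A₁ V₁max α q := by
  rw [vol1, vol1, two_pi_sub_sub_two_pi_sub, pistonX_neg]

lemma vol2_two_pi_sub (q : ℝ) : vol2 r l A₂ V₂max (2 * π - q) = vol2 r l A₂ V₂max q := by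
  rw [vol2, vol2, pistonX_two_pi_sub]

lemma pressure_reflect (α q : ℝ) :
    pressure r l A₁ A₂ V₁max V₂max (2 * π - α) Th Tc N R (2 * π - q) =
      pressure r l A₁ A₂ V₁max V₂max α Th Tc N R q := by
  rw [pressure, pressure, vol1_reflect, vol2_two_pi_sub]

lemma torque_reflect (α q : ℝ) :
    torque r l A₁ A₂ V₁max V₂max (2 * π - α) Th Tc N R pa (2 * π - q) =
      -torque r l A₁ A₂ V₁max V₂max α Th Tc N R pa q := by
  rw [torque, torque, two_pi_sub_sub_two_pi_sub, torqueArm_neg, torqueArm_two_pi_sub,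
    pressure_reflect]
  ring

end Reflection

theorem torque_reflection_symmetry_general
    (r l A₁ A₂ V₁max V₂max Th Tc N R pa : ℝ) :
    ∀ (q α : ℝ),
      torque r l A₁ A₂ V₁max V₂max (2 * Real.pi - α) Th Tc N R pa (2 * Real.pi - q) =
        -torque r l A₁ A₂ V₁max V₂max α Th Tc N R pa q ∧
      (torque r l A₁ A₂ V₁max V₂max α Th Tc N R pa q = 0 ↔
        torque r l A₁ A₂ V₁max V₂max (2 * Real.pi - α) Th Tc N R pa (2 * Real.pi - q) = 0) := by
  intro q α
  have hreflect := torque_reflect r l A₁ A₂ V₁max V₂max Th Tc N R pa α q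
  exact ⟨hreflect, by rw [hreflect, neg_eq_zero]⟩

/-- **symmetry of the torque under `(q, α) ↦ (2π − q, 2π − α)`.**
If `V₁(q)/T_h + V₂(q)/T_c ≠ 0` for all `q` and all phase shifts `α`, then for all
`q, α`: `τ_{2π−α}(2π − q) = −τ_α(q)`.  In particular `q*` is a zero of `τ_α` iff
`2π − q*` is a zero of `τ_{2π−α}`, so the bifurcation diagram of equilibria is
symmetric under `(q, α) ↦ (2π − q, 2π − α)`. -/
theorem torque_reflection_symmetry
    (r l A₁ A₂ V₁max V₂max Th Tc N R pa : ℝ)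
    (hr : 0 < r) (hrl : r < l) (hA₁ : 0 < A₁) (hA₂ : 0 < A₂)
    (hTh : 0 < Th) (hTc : 0 < Tc) (hN : 0 < N) (hR : 0 < R)
    (hdenom : ∀ (α q : ℝ),
      vol1 r l A₁ V₁max α q / Th + vol2 r l A₂ V₂max q / Tc ≠ 0) :
    ∀ (q α : ℝ),
      torque r l A₁ A₂ V₁max V₂max (2 * Real.pi - α) Th Tc N R pa (2 * Real.pi - q) =
        -torque r l A₁ A₂ V₁max V₂max α Th Tc N R pa q ∧
      (torque r l A₁ A₂ V₁max V₂max α Th Tc N R pa q = 0 ↔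
        torque r l A₁ A₂ V₁max V₂max (2 * Real.pi - α) Th Tc N R pa (2 * Real.pi - q) = 0) :=
  torque_reflection_symmetry_general r l A₁ A₂ V₁max V₂max Th Tc N R pa
end
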